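/- arXiv:2412.11633 — 2 statements merged into one kernel-verified Lean document; each statement's English description precedes it below -/
import Mathlib

section
/- Let Φ be the non-selective measurement channel associated with a complete family of pairwise orthogonal projections {P_a} on ℂ^n, let ρ be a quantum state on ℂ^n, and let σ be a quantum state on ℂ^m. Then ‖ρ ⊗ σ − Φ(ρ) ⊗ σ‖₂² = ‖ρ − Φ(ρ)‖₂² · Tr(σ²). Consequently, if σ is not pure (Tr(σ²) < 1) and Φ(ρ) ≠ ρ, the squared Hilbert–Schmidt distance strictly decreases upon adding the uncorrelated state σ: ‖ρ ⊗ σ − Φ(ρ) ⊗ σ‖₂² < ‖ρ − Φ(ρ)‖₂². -/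
/-!
Only `D = ρ - Φ(ρ)` matters, and `ρ ⊗ σ - Φ(ρ) ⊗ σ = D ⊗ σ`. Since `|X|² = X†X`, the squared
Hilbert–Schmidt norm is `Tr(X†X)`, and `(A ⊗ B)†(A ⊗ B) = A†A ⊗ B†B` makes it multiplicative
under Kronecker products; for Hermitian `σ` the factor `‖σ‖₂²` is `Tr(σ²)`. If `Φ(ρ) ≠ ρ` then
`‖D‖₂ > 0`, so a factor `Tr(σ²) < 1` makes the distance strictly smaller.
-/

open Matrix Kronecker
open scoped ComplexOrder

noncomputable section

variable {n : Type*} [Fintype n] [DecidableEq n]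

/-- `|X| = (X† X)^{1/2}`, the positive semidefinite absolute value of a matrix. -/
def matAbs (X : Matrix n n ℂ) : Matrix n n ℂ :=
  (Matrix.posSemidef_conjTranspose_mul_self X).1.eigenvectorUnitary.1 *
    Matrix.diagonal ((↑) ∘ (√·) ∘ (Matrix.posSemidef_conjTranspose_mul_self X).1.eigenvalues) *
    (star (Matrix.posSemidef_conjTranspose_mul_self X).1.eigenvectorUnitary : Matrix n n ℂ)

/-- `Tr |X|^p`, with the `p`-th power taken through the functional calculus. -/
def traceAbsPow (p : ℝ) (X : Matrix n n ℂ) : ℝ :=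
  (Matrix.trace (cfc (fun x : ℝ => x ^ p) (matAbs X))).re

/-- The Schatten `p`-norm `‖X‖_p = (Tr |X|^p)^(1/p)`. -/
def schatten (p : ℝ) (X : Matrix n n ℂ) : ℝ :=
  (traceAbsPow p X) ^ (1 / p)

/-- Matrix square root via the functional calculus (agrees with the positive semidefinite
square root on positive semidefinite matrices). -/
def msqrt (X : Matrix n n ℂ) : Matrix n n ℂ := cfc Real.sqrt X

/-- Matrix natural logarithm via the functional calculus. -/
def mlog (X : Matrix n n ℂ) : Matrix n n ℂ := cfc Real.log X

/-- Von Neumann entropy `S(ρ) = -Tr(ρ log ρ)`. -/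
def vnEntropy (ρ : Matrix n n ℂ) : ℝ := -(Matrix.trace (ρ * mlog ρ)).re

/-- Relative entropy `S(ρ‖σ) = Tr(ρ log ρ) - Tr(ρ log σ)`. -/
def relEnt (ρ σ : Matrix n n ℂ) : ℝ :=
  (Matrix.trace (ρ * mlog ρ)).re - (Matrix.trace (ρ * mlog σ)).re

/-- Uhlmann fidelity `F(ρ,σ) = (Tr|√σ √ρ|)²`. -/
def fidelity (ρ σ : Matrix n n ℂ) : ℝ :=
  ((Matrix.trace (matAbs (msqrt σ * msqrt ρ))).re) ^ 2

/-- Partial trace over the second factor. -/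
def ptraceE {S E : Type*} [Fintype E] (Ω : Matrix (S × E) (S × E) ℂ) : Matrix S S ℂ :=
  Matrix.of fun s s' => ∑ e, Ω (s, e) (s', e)

/-- Partial trace over the first factor. -/
def ptraceS {S E : Type*} [Fintype S] (Ω : Matrix (S × E) (S × E) ℂ) : Matrix E E ℂ :=
  Matrix.of fun e e' => ∑ s, Ω (s, e) (s, e')

theorem Matrix.sub_kronecker {R l m p q : Type*} [Ring R] (A₁ A₂ : Matrix l m R)
    (B : Matrix p q R) : (A₁ - A₂) ⊗ₖ B = A₁ ⊗ₖ B - A₂ ⊗ₖ B := by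
  ext; simp [sub_mul]

theorem posSemidef_matAbs (X : Matrix n n ℂ) : (matAbs X).PosSemidef := by
  refine PosSemidef.mul_mul_conjTranspose_same ?_ _
  exact posSemidef_diagonal_iff.mpr fun _ => Complex.zero_le_real.mpr (Real.sqrt_nonneg _)

theorem matAbs_mul_self (X : Matrix n n ℂ) : matAbs X * matAbs X = Xᴴ * X := by
  set hX := posSemidef_conjTranspose_mul_self X
  set U := hX.1.eigenvectorUnitary
  have hsqrt : (diagonal ((↑) ∘ (√·) ∘ hX.1.eigenvalues) : Matrix n n ℂ) *
      diagonal ((↑) ∘ (√·) ∘ hX.1.eigenvalues) = diagonal (RCLike.ofReal ∘ hX.1.eigenvalues) := by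
    rw [diagonal_mul_diagonal]
    congr 1
    funext i
    simp [← Complex.ofReal_mul, Real.mul_self_sqrt (hX.eigenvalues_nonneg i)]
  calc matAbs X * matAbs X
      = U.1 * (diagonal ((↑) ∘ (√·) ∘ hX.1.eigenvalues) * ((star U : Matrix n n ℂ) * U.1) *
          diagonal ((↑) ∘ (√·) ∘ hX.1.eigenvalues)) * (star U : Matrix n n ℂ) := by
        simp only [matAbs, Matrix.mul_assoc]; rfl
    _ = Xᴴ * X := by
        rw [Unitary.coe_star_mul_self, Matrix.mul_one, hsqrt]
        exact hX.1.spectral_theorem.symm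

theorem schatten_two_sq (X : Matrix n n ℂ) : schatten 2 X ^ 2 = (Xᴴ * X).trace.re := by
  have hsq : cfc (fun x : ℝ => x ^ (2 : ℝ)) (matAbs X) = Xᴴ * X := by
    have : IsSelfAdjoint (matAbs X) := (posSemidef_matAbs X).isHermitian
    simp_rw [Real.rpow_two, pow_two]
    rw [cfc_mul (fun x : ℝ => x) (fun x => x) (matAbs X), cfc_id' ℝ (matAbs X), matAbs_mul_self]
  have hnonneg : 0 ≤ (Xᴴ * X).trace.re :=
    (Complex.nonneg_iff.mp (posSemidef_conjTranspose_mul_self X).trace_nonneg).1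
  rw [schatten, traceAbsPow, hsq, ← Real.sqrt_eq_rpow, Real.sq_sqrt hnonneg]

theorem schatten_two_sq_kronecker {m : Type*} [Fintype m] [DecidableEq m]
    (A : Matrix n n ℂ) (B : Matrix m m ℂ) :
    schatten 2 (A ⊗ₖ B) ^ 2 = schatten 2 A ^ 2 * schatten 2 B ^ 2 := by
  have hA := Complex.nonneg_iff.mp (posSemidef_conjTranspose_mul_self A).trace_nonneg
  simp only [schatten_two_sq, conjTranspose_kronecker, ← mul_kronecker_mul, trace_kronecker,
    Complex.mul_re, ← hA.2, zero_mul, sub_zero]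

theorem schatten_two_sq_of_isHermitian {X : Matrix n n ℂ} (hX : X.IsHermitian) :
    schatten 2 X ^ 2 = (X * X).trace.re := by
  rw [schatten_two_sq, hX.eq]

theorem schatten_two_sq_pos {X : Matrix n n ℂ} (hX : X ≠ 0) : 0 < schatten 2 X ^ 2 := by
  have hpos : 0 < (Xᴴ * X).trace :=
    (posSemidef_conjTranspose_mul_self X).trace_nonneg.lt_of_ne'
      (trace_conjTranspose_mul_self_eq_zero_iff.not.mpr hX)
  rw [schatten_two_sq]
  exact (Complex.pos_iff.mp hpos).1

theorem hilbertSchmidt_kron_uncorrelated_general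
    {n m ι : Type*} [Fintype n] [DecidableEq n] [Fintype m] [DecidableEq m] [Fintype ι]
    (P : ι → Matrix n n ℂ)
    (ρ : Matrix n n ℂ)
    (σ : Matrix m m ℂ) (hσ : σ.PosSemidef) :
    schatten 2 (ρ ⊗ₖ σ - (∑ a, P a * ρ * P a) ⊗ₖ σ) ^ 2
      = schatten 2 (ρ - ∑ a, P a * ρ * P a) ^ 2 * (Matrix.trace (σ * σ)).re ∧
    ((Matrix.trace (σ * σ)).re < 1 → (∑ a, P a * ρ * P a) ≠ ρ →
      schatten 2 (ρ ⊗ₖ σ - (∑ a, P a * ρ * P a) ⊗ₖ σ) ^ 2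
        < schatten 2 (ρ - ∑ a, P a * ρ * P a) ^ 2) := by
  have hsq : schatten 2 (ρ ⊗ₖ σ - (∑ a, P a * ρ * P a) ⊗ₖ σ) ^ 2
      = schatten 2 (ρ - ∑ a, P a * ρ * P a) ^ 2 * (Matrix.trace (σ * σ)).re := by
    rw [← sub_kronecker, schatten_two_sq_kronecker, schatten_two_sq_of_isHermitian hσ.isHermitian]
  refine ⟨hsq, fun hpure hchanged => ?_⟩
  rw [hsq]
  exact mul_lt_of_lt_one_right (schatten_two_sq_pos (sub_ne_zero.mpr hchanged.symm)) hpure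

/-- Adding an uncorrelated state `σ` rescales the squared Hilbert-Schmidt distance by
`Tr(σ²)`; in particular it strictly decreases when `σ` is not pure and `Φ(ρ) ≠ ρ`. -/
theorem hilbertSchmidt_kron_uncorrelated
    {n m ι : Type*} [Fintype n] [DecidableEq n] [Fintype m] [DecidableEq m] [Fintype ι]
    (P : ι → Matrix n n ℂ)
    (hproj : ∀ a, P a * P a = P a)
    (hherm : ∀ a, (P a)ᴴ = P a)
    (horth : ∀ a b, a ≠ b → P a * P b = 0)
    (hsum : ∑ a, P a = 1)
    (ρ : Matrix n n ℂ) (hρ : ρ.PosSemidef) (hρtr : ρ.trace = 1)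
    (σ : Matrix m m ℂ) (hσ : σ.PosSemidef) (hσtr : σ.trace = 1) :
    schatten 2 (ρ ⊗ₖ σ - (∑ a, P a * ρ * P a) ⊗ₖ σ) ^ 2
      = schatten 2 (ρ - ∑ a, P a * ρ * P a) ^ 2 * (Matrix.trace (σ * σ)).re ∧
    ((Matrix.trace (σ * σ)).re < 1 → (∑ a, P a * ρ * P a) ≠ ρ →
      schatten 2 (ρ ⊗ₖ σ - (∑ a, P a * ρ * P a) ⊗ₖ σ) ^ 2
        < schatten 2 (ρ - ∑ a, P a * ρ * P a) ^ 2) :=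
  hilbertSchmidt_kron_uncorrelated_general P ρ σ hσ
end
end

section
/- Let ρ_ε := (1−ε)·1₄/4 + ε·|φ⁺⟩⟨φ⁺| be the two-qubit Werner state, where |φ⁺⟩ := (|00⟩+|11⟩)/√2 and 0 ≤ ε ≤ 1, and let Φ be the local σ_z-measurement on the first qubit, Φ(X) := Σ_{a∈{0,1}} (E_aa ⊗ 1₂) X (E_aa ⊗ 1₂). Then the trace distance appearing in the trace-distance realism monotone satisfies Tr|ρ_ε − (1/2)·Φ(ρ_ε)| = 1/2 for 0 ≤ ε ≤ 1/3, and Tr|ρ_ε − (1/2)·Φ(ρ_ε)| = (1+3ε)/4 for 1/3 ≤ ε ≤ 1. -/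
open Matrix Kronecker
open scoped ComplexOrder

noncomputable section

variable {n : Type*} [Fintype n] [DecidableEq n]

/-- The two-qubit maximally entangled vector `|φ⁺⟩ = (|00⟩ + |11⟩)/√2`. -/
def phiPlus : Fin 2 × Fin 2 → ℂ :=
  fun x => if x.1 = x.2 then ((Real.sqrt 2 : ℝ) : ℂ)⁻¹ else 0

/-- The Werner state `ρ_ε = (1-ε)·1₄/4 + ε·|φ⁺⟩⟨φ⁺|`. -/
def werner (ε : ℝ) : Matrix (Fin 2 × Fin 2) (Fin 2 × Fin 2) ℂ :=
  (((1 - ε) / 4 : ℝ) : ℂ) • (1 : Matrix (Fin 2 × Fin 2) (Fin 2 × Fin 2) ℂ)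
    + (ε : ℂ) • Matrix.vecMulVec phiPlus (star phiPlus)

/-- The local `σ_z`-measurement on the first qubit. -/
def measZ (X : Matrix (Fin 2 × Fin 2) (Fin 2 × Fin 2) ℂ) :
    Matrix (Fin 2 × Fin 2) (Fin 2 × Fin 2) ℂ :=
  ∑ a : Fin 2,
    (Matrix.single a a (1 : ℂ) ⊗ₖ (1 : Matrix (Fin 2) (Fin 2) ℂ)) * X *
      (Matrix.single a a (1 : ℂ) ⊗ₖ (1 : Matrix (Fin 2) (Fin 2) ℂ))

/-!
In the basis `φ⁺, φ⁻, |01⟩, |10⟩` both `ρ_ε` and `Φ(ρ_ε)` are diagonal, so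
`X = ρ_ε - Φ(ρ_ε)/2` has the spectral decomposition `∑ λᵢ |vᵢ⟩⟨vᵢ|` with eigenvalues
`(1+5ε)/8, (1-3ε)/8, (1-ε)/8, (1-ε)/8`. Then `|X| = ∑ |λᵢ| |vᵢ⟩⟨vᵢ|`, since this is the
positive semidefinite square root of `XᴴX = ∑ λᵢ² |vᵢ⟩⟨vᵢ|`, hence
`Tr|X| = ∑ |λᵢ|`. Only the eigenvalue `(1-3ε)/8` changes sign on `[0,1]`, at `ε = 1/3`.
-/

section Spectral

variable {m ι : Type*} [Fintype m]

theorem matAbs_eq_of_posSemidef_of_mul_self_eq [DecidableEq m] {X M : Matrix m m ℂ}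
    (hM : M.PosSemidef) (hMX : M * M = Xᴴ * X) : matAbs X = M := by
  open scoped MatrixOrder in
  have hX := posSemidef_conjTranspose_mul_self X
  have h_cfc : matAbs X = cfc Real.sqrt (Xᴴ * X) := by
    rw [hX.1.cfc_eq]; rfl
  rw [h_cfc, ← cfcₙ_eq_cfc (hf0 := Real.sqrt_zero), ← CFC.sqrt_eq_real_sqrt _ hX.nonneg, ← hMX]
  exact CFC.sqrt_mul_self M hM.nonneg

variable [Fintype ι] (v : ι → m → ℂ)

def spectralSum (μ : ι → ℝ) : Matrix m m ℂ :=
  ∑ i, μ i • vecMulVec (v i) (star (v i))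

theorem spectralSum_isHermitian (μ : ι → ℝ) : (spectralSum v μ).IsHermitian :=
  isSelfAdjoint_sum _ fun i _ =>
    IsSelfAdjoint.smul (.all (μ i)) (posSemidef_vecMulVec_self_star (v i)).1

variable {v}

theorem spectralSum_posSemidef {μ : ι → ℝ} (hμ : 0 ≤ μ) : (spectralSum v μ).PosSemidef :=
  posSemidef_sum _ fun i _ => (posSemidef_vecMulVec_self_star (v i)).smul (hμ i)

variable [DecidableEq ι]

theorem spectralSum_mul_spectralSum (hv : ∀ i j, star (v i) ⬝ᵥ v j = if i = j then 1 else 0)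
    (μ ν : ι → ℝ) : spectralSum v μ * spectralSum v ν = spectralSum v (μ * ν) := by
  simp only [spectralSum, Finset.sum_mul_sum, smul_mul_smul, vecMulVec_mul_vecMulVec, hv,
    ite_smul, one_smul, zero_smul]
  refine Finset.sum_congr rfl fun i _ => ?_
  rw [Finset.sum_eq_single i (fun j _ hji => by simp [hji.symm]) (by simp)]
  simp

theorem trace_spectralSum (hv : ∀ i j, star (v i) ⬝ᵥ v j = if i = j then 1 else 0)
    (μ : ι → ℝ) : (spectralSum v μ).trace = ∑ i, (μ i : ℂ) := by
  have hnorm (i : ι) : v i ⬝ᵥ star (v i) = 1 := by rw [dotProduct_comm, hv, if_pos rfl]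
  simp [spectralSum, trace_sum, trace_smul, hnorm]

theorem matAbs_spectralSum [DecidableEq m]
    (hv : ∀ i j, star (v i) ⬝ᵥ v j = if i = j then 1 else 0) (μ : ι → ℝ) :
    matAbs (spectralSum v μ) = spectralSum v |μ| := by
  refine matAbs_eq_of_posSemidef_of_mul_self_eq (spectralSum_posSemidef (abs_nonneg μ)) ?_
  rw [(spectralSum_isHermitian v μ).eq, spectralSum_mul_spectralSum hv,
    spectralSum_mul_spectralSum hv]
  exact congrArg _ (funext fun i => abs_mul_abs_self (μ i))

theorem re_trace_matAbs_spectralSum [DecidableEq m]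
    (hv : ∀ i j, star (v i) ⬝ᵥ v j = if i = j then 1 else 0) (μ : ι → ℝ) :
    (matAbs (spectralSum v μ)).trace.re = ∑ i, |μ i| := by
  simp [matAbs_spectralSum hv, trace_spectralSum hv]

end Spectral

def phiMinus : Fin 2 × Fin 2 → ℂ :=
  fun x => if x.1 = x.2 then (if x.1 = 0 then 1 else -1) * ((Real.sqrt 2 : ℝ) : ℂ)⁻¹ else 0

def wernerEigenbasis : Fin 4 → Fin 2 × Fin 2 → ℂ :=
  ![phiPlus, phiMinus, Pi.single (0, 1) 1, Pi.single (1, 0) 1]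

theorem inv_sqrt_two_mul_self : ((Real.sqrt 2 : ℝ) : ℂ)⁻¹ * ((Real.sqrt 2 : ℝ) : ℂ)⁻¹ = 2⁻¹ := by
  rw [← mul_inv, ← Complex.ofReal_mul, Real.mul_self_sqrt zero_le_two]
  norm_num

theorem wernerEigenbasis_orthonormal (i j : Fin 4) :
    star (wernerEigenbasis i) ⬝ᵥ wernerEigenbasis j = if i = j then 1 else 0 := by
  fin_cases i <;> fin_cases j <;>
    norm_num [wernerEigenbasis, phiPlus, phiMinus, dotProduct, Fintype.sum_prod_type,
      Fin.sum_univ_two, Pi.single_apply, inv_sqrt_two_mul_self]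

theorem werner_sub_half_measZ (ε : ℝ) :
    werner ε - (2 : ℂ)⁻¹ • measZ (werner ε) = spectralSum wernerEigenbasis
      ![(1 + 5 * ε) / 8, (1 - 3 * ε) / 8, (1 - ε) / 8, (1 - ε) / 8] := by
  ext ⟨i, j⟩ ⟨k, l⟩
  simp only [werner, measZ, spectralSum, wernerEigenbasis, Matrix.sub_apply, Matrix.add_apply,
    Matrix.smul_apply, Matrix.sum_apply, mul_apply, kroneckerMap_apply, single_apply, one_apply,
    vecMulVec_apply, Fintype.sum_prod_type, Fin.sum_univ_two, Fin.sum_univ_four, Pi.star_apply, smul_eq_mul]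
  fin_cases i <;> fin_cases j <;> fin_cases k <;> fin_cases l <;>
    simp [phiPlus, phiMinus, inv_sqrt_two_mul_self] <;> ring

theorem re_trace_matAbs_werner_sub_half_measZ (ε : ℝ) :
    (matAbs (werner ε - (2 : ℂ)⁻¹ • measZ (werner ε))).trace.re =
      (|1 + 5 * ε| + |1 - 3 * ε| + 2 * |1 - ε|) / 8 := by
  rw [werner_sub_half_measZ, re_trace_matAbs_spectralSum wernerEigenbasis_orthonormal,
    Fin.sum_univ_four]
  simp only [Matrix.cons_val, abs_div, abs_of_pos (by norm_num : (0 : ℝ) < 8)]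
  ring

/-- The trace norm `Tr|ρ_ε - Φ(ρ_ε)/2|` for the Werner state equals `1/2` on `[0,1/3]`
and `(1+3ε)/4` on `[1/3,1]`. -/
theorem werner_traceNorm_realism
    (ε : ℝ) (h0 : 0 ≤ ε) (h1 : ε ≤ 1) :
    (ε ≤ 1 / 3 →
      (Matrix.trace (matAbs (werner ε - (2 : ℂ)⁻¹ • measZ (werner ε)))).re = 1 / 2) ∧
    (1 / 3 ≤ ε →
      (Matrix.trace (matAbs (werner ε - (2 : ℂ)⁻¹ • measZ (werner ε)))).re
        = (1 + 3 * ε) / 4) := by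
  rw [re_trace_matAbs_werner_sub_half_measZ, abs_of_nonneg (by linarith : 0 ≤ 1 + 5 * ε),
    abs_of_nonneg (by linarith : 0 ≤ 1 - ε)]
  constructor
  · intro hε
    rw [abs_of_nonneg (by linarith : 0 ≤ 1 - 3 * ε)]
    ring
  · intro hε
    rw [abs_of_nonpos (by linarith : 1 - 3 * ε ≤ 0)]
    ring
end
end
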